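/- arXiv:1708.02620 — 2 statements merged into one kernel-verified Lean document; each statement's English description precedes it below -/
import Mathlib

section
/- (Davis–Kahan sin-Theta bound specialization) Let L and L~ be n×n real symmetric matrices. Let Y and Y~ be n×(K-1) matrices whose columns are orthonormal eigenvectors of L/n and L~/n corresponding to their 2nd through K-th smallest eigenvalues, and suppose the eigenvalues λ_2(L~/n) = ... = λ_K(L~/n) = t are all equal. Define δ = min{ t - 0, λ_{K+1}(L/n) - t } and assume δ > 0 and the 2nd through K-th smallest eigenvalues of L/n lie outside of both intervals [0, t - δ) and (t + δ, ∞) appropriately so that the spectral separation holds. Then the Frobenius norm of sin Θ(Y, Y~), where Θ is the diagonal matrix of principal angles between the column spaces, satisfies ||sin Θ(Y, Y~)||_F ≤ ||L - L~||_F / (n δ). -/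
/-!
Put `W = Uᵀ Ỹ`. Its columns are orthonormal, so `‖W‖_F² = K - 1`, and the rows of `W` indexed by
`1, …, K - 1` form `Yᵀ Ỹ`; hence `(K - 1) - ‖Yᵀ Ỹ‖_F²` is the mass of the remaining rows, all of
which belong to eigenvalues `μ j` at distance at least `δ` from `t`. As `(L̃/n) Ỹ = t Ỹ`, the
residual `((L - L̃)/n) Ỹ = (L/n - t) Ỹ` has `U`-coordinates `(μ j - t) W j c`, so `δ²` times that
mass is at most `‖((L - L̃)/n) Ỹ‖_F² ≤ ‖(L - L̃)/n‖_F²`.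
-/

open Matrix Finset

theorem Real.sqrt_le_sqrt_div_of_sq_mul_le {x y a : ℝ} (ha : 0 < a) (h : a ^ 2 * x ≤ y) :
    √x ≤ √y / a := by
  rw [le_div_iff₀ ha, ← Real.sqrt_sq ha.le, ← Real.sqrt_mul' _ (sq_nonneg a)]
  exact Real.sqrt_le_sqrt (by linarith)

theorem Fin.val_eq_zero_or_le_of_notMem_range_castLE_succ {m n : ℕ} (h : m + 1 ≤ n) {j : Fin n}
    (hj : j ∉ Set.range fun c : Fin m => Fin.castLE h c.succ) : (j : ℕ) = 0 ∨ m + 1 ≤ j := by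
  by_contra! hj'
  exact hj ⟨⟨j - 1, by omega⟩, Fin.ext (by simp; omega)⟩

namespace Matrix

variable {ι κ κ' : Type*}

theorem trace_transpose_mul_self_eq_sum_sq [Fintype ι] [Fintype κ] (A : Matrix ι κ ℝ) :
    trace (Aᵀ * A) = ∑ i, ∑ j, A i j ^ 2 := by
  rw [Finset.sum_comm]
  simp [trace, mul_apply, pow_two]

theorem trace_transpose_mul_self_nonneg [Fintype ι] [Fintype κ] (A : Matrix ι κ ℝ) :
    0 ≤ trace (Aᵀ * A) := by
  rw [trace_transpose_mul_self_eq_sum_sq]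
  positivity

theorem trace_transpose_smul_mul_self [Fintype ι] [Fintype κ] (c : ℝ) (A : Matrix ι κ ℝ) :
    trace ((c • A)ᵀ * (c • A)) = c ^ 2 * ∑ i, ∑ j, A i j ^ 2 := by
  rw [transpose_smul, Matrix.smul_mul, Matrix.mul_smul, smul_smul, trace_smul,
    trace_transpose_mul_self_eq_sum_sq, smul_eq_mul, sq]

theorem trace_transpose_mul_self_submatrix [DecidableEq ι] [Fintype κ] [Fintype κ']
    (W : Matrix ι κ ℝ) {e : κ' → ι} (he : Function.Injective e) :
    trace ((W.submatrix e id)ᵀ * W.submatrix e id) = ∑ j ∈ univ.image e, ∑ c, W j c ^ 2 := by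
  rw [trace_transpose_mul_self_eq_sum_sq, sum_image fun a _ b _ h => he h]
  rfl

theorem trace_transpose_mul_self_transpose_mul [Fintype ι] [Fintype κ] [DecidableEq ι]
    {U : Matrix ι ι ℝ} (hU : Uᵀ * U = 1) (X : Matrix ι κ ℝ) :
    trace ((Uᵀ * X)ᵀ * (Uᵀ * X)) = trace (Xᵀ * X) := by
  rw [transpose_mul, transpose_transpose, Matrix.mul_assoc, ← Matrix.mul_assoc U,
    mul_eq_one_comm.mp hU, Matrix.one_mul]

/-- `Q = 1 - V Vᵀ` is an orthogonal projection, and `‖E‖_F² = ‖E V‖_F² + ‖E Q‖_F²`. -/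
theorem trace_transpose_mul_self_mul_le [Fintype ι] [Fintype κ] [Fintype κ'] [DecidableEq κ]
    [DecidableEq κ'] {V : Matrix κ κ' ℝ} (hV : Vᵀ * V = 1) (E : Matrix ι κ ℝ) :
    trace ((E * V)ᵀ * (E * V)) ≤ trace (Eᵀ * E) := by
  set Q : Matrix κ κ ℝ := 1 - V * Vᵀ
  have hQQ : Q * Qᵀ = Q := by
    simp only [Q, transpose_sub, transpose_one, transpose_mul, transpose_transpose, sub_mul,
      mul_sub, Matrix.one_mul, Matrix.mul_one, Matrix.mul_assoc, ← Matrix.mul_assoc Vᵀ, hV]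
    abel
  have hsplit : trace ((E * Q)ᵀ * (E * Q)) = trace (Eᵀ * E) - trace ((E * V)ᵀ * (E * V)) := by
    rw [transpose_mul, Matrix.mul_assoc, trace_mul_comm, Matrix.mul_assoc, Matrix.mul_assoc, hQQ]
    simp only [Q, Matrix.mul_sub, trace_sub, Matrix.mul_one, transpose_mul]
    rw [Matrix.mul_assoc Vᵀ, trace_mul_comm Vᵀ]
    simp only [Matrix.mul_assoc]
  linarith [trace_transpose_mul_self_nonneg (E * Q)]

theorem transpose_submatrix_mul_submatrix [Fintype ι] [DecidableEq ι] [DecidableEq κ]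
    {U : Matrix ι ι ℝ} (hU : Uᵀ * U = 1) {e : κ → ι} (he : Function.Injective e) :
    (U.submatrix id e)ᵀ * U.submatrix id e = 1 := by
  rw [transpose_submatrix, ← submatrix_mul _ _ _ _ _ Function.bijective_id, hU, submatrix_one _ he]

section Spectral

variable [Fintype ι] [DecidableEq ι] {A U : Matrix ι ι ℝ} {μ : ι → ℝ}

theorem mul_submatrix_eq_submatrix_mul_diagonal [Fintype κ] [DecidableEq κ] (hU : Uᵀ * U = 1)
    (hA : A = U * diagonal μ * Uᵀ) (e : κ → ι) :
    A * U.submatrix id e = U.submatrix id e * diagonal (μ ∘ e) := by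
  have hAU : A * U = U * diagonal μ := by rw [hA, Matrix.mul_assoc, hU, Matrix.mul_one]
  ext i j
  have := congrFun (congrFun hAU i) (e j)
  rw [mul_diagonal] at this ⊢
  simpa [mul_apply] using this

theorem trace_transpose_mul_self_mul_sub_smul [Fintype κ] (hU : Uᵀ * U = 1)
    (hA : A = U * diagonal μ * Uᵀ) (t : ℝ) (X : Matrix ι κ ℝ) :
    trace ((A * X - t • X)ᵀ * (A * X - t • X)) = ∑ j, (μ j - t) ^ 2 * ∑ c, (Uᵀ * X) j c ^ 2 := by
  have hUA : Uᵀ * A = diagonal μ * Uᵀ := by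
    rw [hA, ← Matrix.mul_assoc, ← Matrix.mul_assoc, hU, Matrix.one_mul]
  have hrot : Uᵀ * (A * X - t • X) = diagonal μ * (Uᵀ * X) - t • (Uᵀ * X) := by
    rw [Matrix.mul_sub, Matrix.mul_smul, ← Matrix.mul_assoc, hUA, Matrix.mul_assoc]
  rw [← trace_transpose_mul_self_transpose_mul hU, hrot, trace_transpose_mul_self_eq_sum_sq]
  refine sum_congr rfl fun j _ => ?_
  rw [mul_sum]
  refine sum_congr rfl fun c _ => ?_
  simp only [sub_apply, smul_apply, diagonal_mul, smul_eq_mul]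
  ring

theorem davis_kahan_sin_theta [Fintype κ] [Fintype κ'] [DecidableEq κ'] {B : Matrix ι ι ℝ}
    (hU : Uᵀ * U = 1) (hA : A = U * diagonal μ * Uᵀ) {e : κ → ι} (he : Function.Injective e)
    {Yt : Matrix ι κ' ℝ} (hYt : Ytᵀ * Yt = 1) {t δ : ℝ} (hBYt : B * Yt = t • Yt) (hδ : 0 ≤ δ)
    (hgap : ∀ j ∉ Set.range e, δ ≤ |μ j - t|) :
    δ ^ 2 * (Fintype.card κ' - trace (((U.submatrix id e)ᵀ * Yt)ᵀ * ((U.submatrix id e)ᵀ * Yt)))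
      ≤ trace ((A - B)ᵀ * (A - B)) := by
  set W := Uᵀ * Yt
  set S := univ.image e
  have hsel : (U.submatrix id e)ᵀ * Yt = W.submatrix e id :=
    (submatrix_mul Uᵀ Yt e id id Function.bijective_id).symm
  have hcard : trace (Wᵀ * W) = Fintype.card κ' := by
    rw [trace_transpose_mul_self_transpose_mul hU, hYt, trace_one]
  have hcompl : Fintype.card κ' - trace ((W.submatrix e id)ᵀ * W.submatrix e id)
      = ∑ j ∈ Sᶜ, ∑ c, W j c ^ 2 := by
    rw [trace_transpose_mul_self_submatrix W he, ← hcard, trace_transpose_mul_self_eq_sum_sq,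
      ← sum_add_sum_compl S]
    ring
  have hgap_sq : ∀ j ∈ Sᶜ, δ ^ 2 ≤ (μ j - t) ^ 2 := fun j hj => by
    have hj : j ∉ Set.range e := by simpa [S] using hj
    simpa [sq_abs] using pow_le_pow_left₀ hδ (hgap j hj) 2
  calc δ ^ 2 * (Fintype.card κ' - trace (((U.submatrix id e)ᵀ * Yt)ᵀ * ((U.submatrix id e)ᵀ * Yt)))
      = ∑ j ∈ Sᶜ, δ ^ 2 * ∑ c, W j c ^ 2 := by rw [hsel, hcompl, mul_sum]
    _ ≤ ∑ j ∈ Sᶜ, (μ j - t) ^ 2 * ∑ c, W j c ^ 2 :=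
      sum_le_sum fun j hj => mul_le_mul_of_nonneg_right (hgap_sq j hj) (by positivity)
    _ ≤ ∑ j, (μ j - t) ^ 2 * ∑ c, W j c ^ 2 :=
      sum_le_sum_of_subset_of_nonneg (subset_univ _) fun _ _ _ => by positivity
    _ = trace (((A - B) * Yt)ᵀ * ((A - B) * Yt)) := by
      rw [Matrix.sub_mul, hBYt, trace_transpose_mul_self_mul_sub_smul hU hA]
    _ ≤ trace ((A - B)ᵀ * (A - B)) := trace_transpose_mul_self_mul_le hYt _

end Spectral

end Matrix

/-- Davis–Kahan sin-Θ specialization: with `Y`, `Ỹ` the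
eigenvector matrices of `L/n`, `L̃/n` for the 2nd through `K`-th smallest
eigenvalues (monotone enumerations `μ`, `μt`), where `μt` is constantly `t` on
those indices, `δ = min(t, λ_{K+1}(L/n) - t) > 0`, and the remaining spectrum
of `L/n` is separated from `t` by `δ`, the Frobenius norm of `sin Θ(Y,Ỹ)`
(equal to `√((K-1) - ‖Yᵀ Ỹ‖_F²)`) is at most `‖L - L̃‖_F / (n δ)`. -/
theorem davis_kahan_specialization (n K : ℕ) (hnK : K + 1 ≤ n)
    (L Lt : Matrix (Fin n) (Fin n) ℝ)
    (U Ut : Matrix (Fin n) (Fin n) ℝ) (μ μt : Fin n → ℝ)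
    (hU : Uᵀ * U = 1) (hd : (n:ℝ)⁻¹ • L = U * Matrix.diagonal μ * Uᵀ)
    (hUt : Utᵀ * Ut = 1) (hdt : (n:ℝ)⁻¹ • Lt = Ut * Matrix.diagonal μt * Utᵀ)
    (t : ℝ) (hμt : ∀ j : Fin n, 1 ≤ (j:ℕ) → (j:ℕ) ≤ K - 1 → μt j = t)
    (Y Yt : Matrix (Fin n) (Fin (K-1)) ℝ)
    (hY : ∀ (i : Fin n) (j : Fin (K-1)),
        Y i j = U i ⟨j.1 + 1, by have := j.isLt; omega⟩)
    (hYt : ∀ (i : Fin n) (j : Fin (K-1)),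
        Yt i j = Ut i ⟨j.1 + 1, by have := j.isLt; omega⟩)
    (δ : ℝ) (hδ : 0 < δ)
    (hsep0 : μ ⟨0, by omega⟩ ≤ t - δ)
    (hsepK : ∀ j : Fin n, K ≤ (j:ℕ) → t + δ ≤ μ j) :
    Real.sqrt ((K - 1 : ℝ) - Matrix.trace ((Yᵀ * Yt)ᵀ * (Yᵀ * Yt)))
      ≤ Real.sqrt (∑ i, ∑ j, (L i j - Lt i j)^2) / ((n:ℝ) * δ) := by
  let e : Fin (K - 1) → Fin n := fun c => Fin.castLE (by omega) c.succ
  have he : Function.Injective e := (Fin.castLE_injective _).comp (Fin.succ_injective _)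
  have hYe : Y = U.submatrix id e := Matrix.ext hY
  have hYte : Yt = Ut.submatrix id e := Matrix.ext hYt
  have hYt_orth : Ytᵀ * Yt = 1 := hYte ▸ transpose_submatrix_mul_submatrix hUt he
  have heig : ((n:ℝ)⁻¹ • Lt) * Yt = t • Yt := by
    have hconst : μt ∘ e = fun _ => t := funext fun c => hμt (e c) (by simp [e]) (by simp [e])
    rw [hYte, mul_submatrix_eq_submatrix_mul_diagonal hUt hdt, hconst, ← smul_one_eq_diagonal,
      Matrix.mul_smul, Matrix.mul_one]
  have hgap : ∀ j ∉ Set.range e, δ ≤ |μ j - t| := fun j hj => by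
    rcases Fin.val_eq_zero_or_le_of_notMem_range_castLE_succ _ hj with hj0 | hjK
    · rw [show j = ⟨0, by omega⟩ from Fin.ext hj0]
      exact le_abs.mpr (Or.inr (by linarith))
    · exact le_abs.mpr (Or.inl (by linarith [hsepK j (by omega)]))
  have hn : (0 : ℝ) < n := by norm_cast; omega
  have hdk := davis_kahan_sin_theta hU hd he hYt_orth heig hδ.le hgap
  rw [← hYe, ← smul_sub, trace_transpose_smul_mul_self, inv_pow, ← div_eq_inv_mul,
    le_div_iff₀ (by positivity)] at hdk
  simp only [Matrix.sub_apply] at hdk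
  have hcard : (K - 1 : ℝ) ≤ Fintype.card (Fin (K - 1)) := by
    rw [Fintype.card_fin]
    cases K <;> simp
  refine Real.sqrt_le_sqrt_div_of_sq_mul_le (by positivity) ?_
  nlinarith [mul_le_mul_of_nonneg_left hcard (sq_nonneg ((n : ℝ) * δ))]
end

section
/- Let M be an m×n matrix whose entries are i.i.d. nonnegative random variables with mean t and bounded fourth moment. Then as m, n → ∞ with m/n → ρ > 0, the scaled matrix M/√(mn) converges almost surely in spectral norm to t · (1_m 1_n^T)/√(mn), i.e., || M/√(mn) - t 1_m 1_n^T/√(mn) || → 0 almost surely. -/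
/-!
Write `Y = X - t`, so that the matrix in question is `(mn)^(-1/2)` times the top-left `m × n`
corner of the centred i.i.d. array `Y`. For any real matrix `‖A‖⁴ = ‖AᵀA‖² ≤ ‖AᵀA‖_F²`, and a
mixed moment `E[Y_ij Y_il Y_kj Y_kl]` vanishes unless `i = k` or `j = l` (and is at most
`μ₄ = E Y⁴` otherwise); hence the `M × N` corner satisfies `E ‖AᵀA‖_F² ≤ μ₄ MN(M + N)`.
Along the dyadic corners `M = c 2^k`, `N = 2^k` this makes `∑ₖ ‖AᵀA‖_F² / 2^(4k)` integrable,
hence almost surely finite, so the spectral norm of the dyadic corner is `o(2^k)` almost surely.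
Deleting rows and columns does not increase the spectral norm, so once `m ≤ c n` the `m × n`
corner is dominated by the dyadic corner just above it, and its norm is `o(n) = o(√(mn))`.
-/

open MeasureTheory ProbabilityTheory Filter Matrix

/-- The spectral (ℓ²-operator) norm of a real rectangular matrix. -/
noncomputable def specNorm {m n : ℕ} (A : Matrix (Fin m) (Fin n) ℝ) : ℝ :=
  ‖LinearMap.toContinuousLinearMap (Matrix.toEuclideanLin A)‖

def gramFrobeniusSq {ι κ : Type*} [Fintype ι] [Fintype κ] (A : Matrix ι κ ℝ) : ℝ :=
  ∑ j, ∑ l, (∑ i, A i j * A i l) ^ 2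

open scoped Matrix.Norms.L2Operator

namespace Matrix

variable {m n m' n' : Type*} [Fintype m] [Fintype n] [Fintype m'] [Fintype n']
  [DecidableEq n] [DecidableEq n']

theorem l2_opNorm_le_sqrt_sum_sq (A : Matrix m n ℝ) : ‖A‖ ≤ √(∑ i, ∑ j, A i j ^ 2) := by
  refine ContinuousLinearMap.opNorm_le_bound _ (Real.sqrt_nonneg _) fun x => ?_
  simp only [LinearEquiv.trans_apply, LinearMap.coe_toContinuousLinearMap']
  rw [EuclideanSpace.norm_eq, EuclideanSpace.norm_eq, ← Real.sqrt_mul (by positivity)]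
  refine Real.sqrt_le_sqrt ?_
  rw [Finset.sum_mul]
  refine Finset.sum_le_sum fun i _ => ?_
  simpa [Matrix.toLpLin_apply, Matrix.mulVec, dotProduct] using
    Finset.sum_mul_sq_le_sq_mul_sq Finset.univ (A i) x

theorem l2_opNorm_pow_four_le_gramFrobeniusSq (A : Matrix m n ℝ) :
    ‖A‖ ^ 4 ≤ gramFrobeniusSq A := by
  have gram : ‖A‖ ^ 2 = ‖Aᵀ * A‖ := by
    rw [sq, ← l2_opNorm_conjTranspose_mul_self, conjTranspose_eq_transpose_of_trivial]
  calc ‖A‖ ^ 4 = ‖Aᵀ * A‖ ^ 2 := by rw [← gram]; ring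
    _ ≤ √(∑ j, ∑ l, (Aᵀ * A) j l ^ 2) ^ 2 := by
      gcongr
      exact l2_opNorm_le_sqrt_sum_sq _
    _ = gramFrobeniusSq A := by
      rw [Real.sq_sqrt (by positivity), gramFrobeniusSq]
      simp only [mul_apply, transpose_apply]

theorem l2_opNorm_submatrix_id_le (A : Matrix m n ℝ) {f : m' → m}
    (hf : f.Injective) : ‖A.submatrix f id‖ ≤ ‖A‖ := by
  refine ContinuousLinearMap.opNorm_le_bound _ (norm_nonneg _) fun x => ?_
  refine le_trans ?_ (l2_opNorm_mulVec A x)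
  simp only [LinearEquiv.trans_apply, LinearMap.coe_toContinuousLinearMap']
  rw [EuclideanSpace.norm_eq, EuclideanSpace.norm_eq]
  refine Real.sqrt_le_sqrt ?_
  calc ∑ i, ‖(A *ᵥ x.ofLp) (f i)‖ ^ 2 = ∑ i ∈ Finset.univ.map ⟨f, hf⟩, ‖(A *ᵥ x.ofLp) i‖ ^ 2 := by
        rw [Finset.sum_map]; rfl
    _ ≤ ∑ i, ‖(A *ᵥ x.ofLp) i‖ ^ 2 :=
      Finset.sum_le_sum_of_subset_of_nonneg (Finset.subset_univ _) fun _ _ _ => by positivity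

theorem l2_opNorm_submatrix_le [DecidableEq m] [DecidableEq m'] (A : Matrix m n ℝ) {f : m' → m}
    {g : n' → n} (hf : f.Injective) (hg : g.Injective) : ‖A.submatrix f g‖ ≤ ‖A‖ := by
  calc ‖A.submatrix f g‖ = ‖(Aᵀ.submatrix g f)ᵀ‖ := rfl
    _ = ‖Aᵀ.submatrix g f‖ := by
      rw [← conjTranspose_eq_transpose_of_trivial, l2_opNorm_conjTranspose]
    _ = ‖(Aᵀ.submatrix id f).submatrix g id‖ := rfl
    _ ≤ ‖Aᵀ.submatrix id f‖ := l2_opNorm_submatrix_id_le _ hg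
    _ = ‖(A.submatrix f id)ᵀ‖ := rfl
    _ = ‖A.submatrix f id‖ := by
      rw [← conjTranspose_eq_transpose_of_trivial, l2_opNorm_conjTranspose]
    _ ≤ ‖A‖ := l2_opNorm_submatrix_id_le _ hf

end Matrix

theorem specNorm_eq_l2_opNorm {m n : ℕ} (A : Matrix (Fin m) (Fin n) ℝ) : specNorm A = ‖A‖ := rfl

theorem specNorm_smul {m n : ℕ} (c : ℝ) (A : Matrix (Fin m) (Fin n) ℝ) :
    specNorm (c • A) = |c| * specNorm A := by
  rw [specNorm_eq_l2_opNorm, specNorm_eq_l2_opNorm, norm_smul, Real.norm_eq_abs]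

def cornerMatrix (a : ℕ → ℕ → ℝ) (m n : ℕ) : Matrix (Fin m) (Fin n) ℝ :=
  Matrix.of fun i j => a i j

theorem cornerMatrix_eq_submatrix (a : ℕ → ℕ → ℝ) {m n M N : ℕ} (hm : m ≤ M) (hn : n ≤ N) :
    cornerMatrix a m n = (cornerMatrix a M N).submatrix (Fin.castLE hm) (Fin.castLE hn) := rfl

theorem specNorm_cornerMatrix_le (a : ℕ → ℕ → ℝ) {m n M N : ℕ} (hm : m ≤ M) (hn : n ≤ N) :
    specNorm (cornerMatrix a m n) ≤ specNorm (cornerMatrix a M N) := by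
  rw [specNorm_eq_l2_opNorm, specNorm_eq_l2_opNorm, cornerMatrix_eq_submatrix a hm hn]
  exact l2_opNorm_submatrix_le _ (Fin.castLE_injective hm) (Fin.castLE_injective hn)

theorem abs_mul_mul_mul_le (a b c d : ℝ) :
    |a * b * c * d| ≤ (a ^ 4 + b ^ 4 + c ^ 4 + d ^ 4) / 4 := by
  rw [abs_le]
  constructor <;>
  nlinarith [sq_nonneg (a * b - c * d), sq_nonneg (a * b + c * d), sq_nonneg (a ^ 2 - b ^ 2),
    sq_nonneg (c ^ 2 - d ^ 2)]

theorem abs_le_pow_four_add_one (x : ℝ) : |x| ≤ x ^ 4 + 1 := by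
  rw [abs_le]
  constructor <;> nlinarith [sq_nonneg (x ^ 2 - 1), sq_nonneg (x - 1), sq_nonneg (x + 1)]

theorem sub_pow_four_le (x t : ℝ) : (x - t) ^ 4 ≤ 8 * (x ^ 4 + t ^ 4) := by
  nlinarith [sq_nonneg (x + t), sq_nonneg (x ^ 2 - t ^ 2), sq_nonneg ((x - t) ^ 2),
    sq_nonneg (x * t), sq_nonneg (x ^ 2 + t ^ 2)]

section FourthMoments

variable {Ω ι : Type*} [MeasurableSpace Ω] {P : Measure Ω} {Y : ι → Ω → ℝ}

theorem MeasureTheory.Integrable.of_pow_four [IsFiniteMeasure P] {f : Ω → ℝ}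
    (h4 : Integrable (fun ω => f ω ^ 4) P) (hf : AEStronglyMeasurable f P) : Integrable f P :=
  (h4.add (integrable_const 1)).mono' hf (Eventually.of_forall fun _ => abs_le_pow_four_add_one _)

theorem MeasureTheory.Integrable.sub_pow_four [IsFiniteMeasure P] {f : Ω → ℝ}
    (h4 : Integrable (fun ω => f ω ^ 4) P) (hf : AEStronglyMeasurable f P) (t : ℝ) :
    Integrable (fun ω => (f ω - t) ^ 4) P := by
  refine ((h4.add (integrable_const (t ^ 4))).const_mul 8).mono' (by fun_prop) ?_
  refine Eventually.of_forall fun ω => ?_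
  rw [Real.norm_eq_abs, abs_of_nonneg (by positivity)]
  exact sub_pow_four_le _ t

theorem integrable_mul_mul_mul (hmeas : ∀ p, Measurable (Y p))
    (h4 : ∀ p, Integrable (fun ω => Y p ω ^ 4) P) (p q r s : ι) :
    Integrable (fun ω => Y p ω * Y q ω * Y r ω * Y s ω) P := by
  refine Integrable.mono' (g := fun ω => (Y p ω ^ 4 + Y q ω ^ 4 + Y r ω ^ 4 + Y s ω ^ 4) / 4)
    (by fun_prop) (by fun_prop) (Eventually.of_forall fun ω => abs_mul_mul_mul_le _ _ _ _)

theorem integral_mul_mul_mul_le (hmeas : ∀ p, Measurable (Y p))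
    (h4 : ∀ p, Integrable (fun ω => Y p ω ^ 4) P) {μ₄ : ℝ} (hμ₄ : ∀ p, ∫ ω, Y p ω ^ 4 ∂P ≤ μ₄)
    (p q r s : ι) : ∫ ω, Y p ω * Y q ω * Y r ω * Y s ω ∂P ≤ μ₄ :=
  calc ∫ ω, Y p ω * Y q ω * Y r ω * Y s ω ∂P
      ≤ ∫ ω, (Y p ω ^ 4 + Y q ω ^ 4 + Y r ω ^ 4 + Y s ω ^ 4) / 4 ∂P :=
        integral_mono (integrable_mul_mul_mul hmeas h4 p q r s) (by fun_prop)
          fun ω => (le_abs_self _).trans (abs_mul_mul_mul_le _ _ _ _)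
    _ = (∫ ω, Y p ω ^ 4 ∂P + ∫ ω, Y q ω ^ 4 ∂P + ∫ ω, Y r ω ^ 4 ∂P + ∫ ω, Y s ω ^ 4 ∂P) / 4 := by
        rw [integral_div, integral_add (by fun_prop) (h4 s), integral_add (by fun_prop) (h4 r),
          integral_add (h4 p) (h4 q)]
    _ ≤ μ₄ := by linarith [hμ₄ p, hμ₄ q, hμ₄ r, hμ₄ s]

end FourthMoments

section Gram

theorem gramFrobeniusSq_eq_sum {ι κ : Type*} [Fintype ι] [Fintype κ] (A : Matrix ι κ ℝ) :
    gramFrobeniusSq A = ∑ j, ∑ l, ∑ i, ∑ k, A i j * A i l * A k j * A k l := by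
  simp only [gramFrobeniusSq, sq, Finset.sum_mul_sum, mul_assoc]

variable {Ω ι κ : Type*} [MeasurableSpace Ω] {P : Measure Ω} {Y : ι × κ → Ω → ℝ}

theorem integral_mul_mul_mul_eq_zero (hindep : iIndepFun Y P) (hmeas : ∀ p, Measurable (Y p))
    (hcenter : ∀ p, ∫ ω, Y p ω ∂P = 0) {i k : ι} {j l : κ} (hik : i ≠ k) (hjl : j ≠ l) :
    ∫ ω, Y (i, j) ω * Y (i, l) ω * Y (k, j) ω * Y (k, l) ω ∂P = 0 := by
  have hrows : IndepFun (fun ω => Y (i, j) ω * Y (i, l) ω) (fun ω => Y (k, j) ω * Y (k, l) ω) P :=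
    (hindep.indepFun_prodMk_prodMk hmeas _ _ _ _ (by simp [hik]) (by simp [hik]) (by simp [hik])
      (by simp [hik])).comp measurable_mul measurable_mul
  have hrow : ∫ ω, Y (i, j) ω * Y (i, l) ω ∂P = 0 := by
    rw [(hindep.indepFun (by simp [hjl])).integral_fun_mul_eq_mul_integral
      (hmeas _).aestronglyMeasurable (hmeas _).aestronglyMeasurable, hcenter, zero_mul]
  calc ∫ ω, Y (i, j) ω * Y (i, l) ω * Y (k, j) ω * Y (k, l) ω ∂P
      = ∫ ω, Y (i, j) ω * Y (i, l) ω * (Y (k, j) ω * Y (k, l) ω) ∂P := by simp only [mul_assoc]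
    _ = 0 := by
      rw [hrows.integral_fun_mul_eq_mul_integral (by fun_prop) (by fun_prop), hrow, zero_mul]

variable [Fintype ι] [Fintype κ]

theorem integrable_gramFrobeniusSq (hmeas : ∀ p, Measurable (Y p))
    (h4 : ∀ p, Integrable (fun ω => Y p ω ^ 4) P) :
    Integrable (fun ω => gramFrobeniusSq (Matrix.of fun i j => Y (i, j) ω)) P := by
  simp only [gramFrobeniusSq_eq_sum, Matrix.of_apply]
  have := integrable_mul_mul_mul hmeas h4
  fun_prop

theorem integral_gramFrobeniusSq_le (hindep : iIndepFun Y P) (hmeas : ∀ p, Measurable (Y p))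
    (hcenter : ∀ p, ∫ ω, Y p ω ∂P = 0) (h4 : ∀ p, Integrable (fun ω => Y p ω ^ 4) P) {μ₄ : ℝ}
    (hμ₄ : ∀ p, ∫ ω, Y p ω ^ 4 ∂P ≤ μ₄) :
    ∫ ω, gramFrobeniusSq (Matrix.of fun i j => Y (i, j) ω) ∂P
      ≤ μ₄ * (Fintype.card ι * Fintype.card κ * (Fintype.card ι + Fintype.card κ)) := by
  classical
  have hterm (i k : ι) (j l : κ) : ∫ ω, Y (i, j) ω * Y (i, l) ω * Y (k, j) ω * Y (k, l) ω ∂P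
      ≤ μ₄ * ((if i = k then 1 else 0) + (if j = l then 1 else 0)) := by
    have hle := integral_mul_mul_mul_le hmeas h4 hμ₄ (i, j) (i, l) (k, j) (k, l)
    rcases eq_or_ne i k with rfl | hik
    · have hμ₄_nonneg : 0 ≤ μ₄ := (integral_nonneg fun ω => by positivity).trans (hμ₄ (i, j))
      rw [if_pos rfl]
      split_ifs <;> linarith
    rcases eq_or_ne j l with rfl | hjl
    · simpa [hik] using hle
    · simp [hik, hjl, integral_mul_mul_mul_eq_zero hindep hmeas hcenter hik hjl]
  simp only [gramFrobeniusSq_eq_sum, Matrix.of_apply]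
  have := integrable_mul_mul_mul hmeas h4
  calc ∫ ω, ∑ j, ∑ l, ∑ i, ∑ k, Y (i, j) ω * Y (i, l) ω * Y (k, j) ω * Y (k, l) ω ∂P
      = ∑ j, ∑ l, ∑ i, ∑ k, ∫ ω, Y (i, j) ω * Y (i, l) ω * Y (k, j) ω * Y (k, l) ω ∂P := by
        simp (disch := fun_prop) only [integral_finsetSum]
    _ ≤ ∑ j : κ, ∑ l : κ, ∑ i : ι, ∑ k : ι,
          μ₄ * ((if i = k then 1 else 0) + (if j = l then 1 else 0)) := by
        gcongr with j _ l _ i _ k _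
        exact hterm i k j l
    _ = _ := by
      simp [← Finset.mul_sum, Finset.sum_add_distrib]
      ring

end Gram

theorem ae_summable_of_summable_integral {Ω ι : Type*} [MeasurableSpace Ω] [Countable ι]
    {P : Measure Ω} {Z : ι → Ω → ℝ} (hZ : ∀ k, 0 ≤ᵐ[P] Z k) (hint : ∀ k, Integrable (Z k) P)
    (hsum : Summable fun k => ∫ ω, Z k ω ∂P) : ∀ᵐ ω ∂P, Summable fun k => Z k ω := by
  have hmeas : AEMeasurable (fun ω => ∑' k, ENNReal.ofReal (Z k ω)) P :=
    AEMeasurable.tsum fun k => (hint k).aemeasurable.ennreal_ofReal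
  have hfinite : ∫⁻ ω, ∑' k, ENNReal.ofReal (Z k ω) ∂P ≠ ⊤ := by
    rw [lintegral_tsum fun k => (hint k).aemeasurable.ennreal_ofReal]
    simp_rw [← ofReal_integral_eq_lintegral_ofReal (hint _) (hZ _)]
    rw [← ENNReal.ofReal_tsum_of_nonneg (fun k => integral_nonneg_of_ae (hZ k)) hsum]
    exact ENNReal.ofReal_ne_top
  filter_upwards [ae_lt_top' hmeas hfinite, ae_all_iff.2 hZ] with ω hω hω0
  simpa [ENNReal.toReal_ofReal (hω0 _)] using ENNReal.summable_toReal hω.ne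

theorem tendsto_zero_of_pow_le {α : Type*} {l : Filter α} {x z : α → ℝ} {n : ℕ} (hn : n ≠ 0)
    (hx : ∀ᶠ s in l, 0 ≤ x s) (hxz : ∀ᶠ s in l, x s ^ n ≤ z s) (hz : Tendsto z l (nhds 0)) :
    Tendsto x l (nhds 0) := by
  have hroot : Tendsto (fun s => z s ^ (n⁻¹ : ℝ)) l (nhds 0) := by
    simpa [Real.zero_rpow (inv_ne_zero (Nat.cast_ne_zero.2 hn))] using
      hz.rpow_const (Or.inr (inv_nonneg.2 (Nat.cast_nonneg n)))
  refine squeeze_zero' hx ?_ hroot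
  filter_upwards [hx, hxz] with s hxs hxzs
  calc x s = (x s ^ n) ^ (n⁻¹ : ℝ) := (Real.pow_rpow_inv_natCast hxs hn).symm
    _ ≤ z s ^ (n⁻¹ : ℝ) := Real.rpow_le_rpow (by positivity) hxzs (by positivity)

theorem ae_tendsto_specNorm_cornerMatrix_dyadic {Ω : Type*} [MeasurableSpace Ω] {P : Measure Ω}
    {Y : ℕ × ℕ → Ω → ℝ} (hindep : iIndepFun Y P) (hmeas : ∀ p, Measurable (Y p))
    (hcenter : ∀ p, ∫ ω, Y p ω ∂P = 0) (h4 : ∀ p, Integrable (fun ω => Y p ω ^ 4) P) {μ₄ : ℝ}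
    (hμ₄ : ∀ p, ∫ ω, Y p ω ^ 4 ∂P ≤ μ₄) (c : ℕ) :
    ∀ᵐ ω ∂P, Tendsto (fun k => specNorm (cornerMatrix (fun i j => Y (i, j) ω) (c * 2 ^ k) (2 ^ k))
      / 2 ^ k) atTop (nhds 0) := by
  have hblock (M N : ℕ) :
      Integrable (fun ω => gramFrobeniusSq (cornerMatrix (fun i j => Y (i, j) ω) M N)) P ∧
      ∫ ω, gramFrobeniusSq (cornerMatrix (fun i j => Y (i, j) ω) M N) ∂P
        ≤ μ₄ * (M * N * (M + N)) := by
    set g : Fin M × Fin N → ℕ × ℕ := Prod.map Fin.val Fin.val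
    have hg : g.Injective := Fin.val_injective.prodMap Fin.val_injective
    refine ⟨integrable_gramFrobeniusSq (Y := fun p => Y (g p)) (fun _ => hmeas _) fun _ => h4 _,
      ?_⟩
    have h := integral_gramFrobeniusSq_le (hindep.precomp hg) (fun _ => hmeas _)
      (fun _ => hcenter _) (fun _ => h4 _) fun _ => hμ₄ _
    rwa [Fintype.card_fin, Fintype.card_fin] at h
  set Z : ℕ → Ω → ℝ := fun k ω =>
    gramFrobeniusSq (cornerMatrix (fun i j => Y (i, j) ω) (c * 2 ^ k) (2 ^ k)) / (2 ^ k) ^ 4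
  have hZ_nonneg (k : ℕ) (ω : Ω) : 0 ≤ Z k ω := by
    simp only [Z, gramFrobeniusSq]
    positivity
  have hZ_int (k : ℕ) : Integrable (Z k) P := (hblock _ _).1.div_const _
  have hZ_le (k : ℕ) : ∫ ω, Z k ω ∂P ≤ μ₄ * (c * (c + 1)) * (1 / 2) ^ k := by
    rw [integral_div, div_le_iff₀ (by positivity)]
    refine (hblock _ _).2.trans_eq ?_
    push_cast
    rw [one_div, inv_pow]
    field_simp
  have hZ_sum : Summable fun k => ∫ ω, Z k ω ∂P :=
    Summable.of_nonneg_of_le (fun k => integral_nonneg (hZ_nonneg k)) hZ_le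
      (summable_geometric_two.mul_left _)
  filter_upwards [ae_summable_of_summable_integral (fun k => Eventually.of_forall (hZ_nonneg k))
    hZ_int hZ_sum] with ω hω
  refine tendsto_zero_of_pow_le four_ne_zero
    (Eventually.of_forall fun k => div_nonneg (norm_nonneg _) (by positivity))
    (Eventually.of_forall fun k => ?_) hω.tendsto_atTop_zero
  rw [div_pow]
  exact div_le_div_of_nonneg_right (l2_opNorm_pow_four_le_gramFrobeniusSq _) (by positivity)

theorem Nat.tendsto_log_atTop {b : ℕ} (hb : 1 < b) : Tendsto (Nat.log b) atTop atTop :=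
  Nat.log_monotone.tendsto_atTop_atTop fun k => ⟨b ^ k, Nat.le_log_of_pow_le hb le_rfl⟩

theorem tendsto_specNorm_cornerMatrix_div {α : Type*} {l : Filter α} (a : ℕ → ℕ → ℝ) (c : ℕ)
    (hdyadic : Tendsto (fun k => specNorm (cornerMatrix a (c * 2 ^ k) (2 ^ k)) / 2 ^ k) atTop
      (nhds 0))
    {m n : α → ℕ} (hn : Tendsto n l atTop) (hmn : ∀ᶠ s in l, m s ≤ c * n s) :
    Tendsto (fun s => specNorm (cornerMatrix a (m s) (n s)) / n s) l (nhds 0) := by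
  set k : α → ℕ := fun s => Nat.log 2 (n s) + 1
  have hk : Tendsto k l atTop :=
    (tendsto_add_atTop_nat 1).comp ((Nat.tendsto_log_atTop one_lt_two).comp hn)
  have hbound : Tendsto
      (fun s => 2 * (specNorm (cornerMatrix a (c * 2 ^ k s) (2 ^ k s)) / 2 ^ k s)) l (nhds 0) := by
    simpa using (hdyadic.comp hk).const_mul 2
  refine squeeze_zero' (Eventually.of_forall fun s => div_nonneg (norm_nonneg _) (by positivity))
    ?_ hbound
  filter_upwards [hmn, hn.eventually_ge_atTop 1] with s hms hns
  have hn_lt : n s < 2 ^ k s := Nat.lt_pow_succ_log_self one_lt_two _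
  have hpow_le : (2 : ℝ) ^ k s / 2 ≤ n s := by
    calc (2 : ℝ) ^ k s / 2 = (2 ^ Nat.log 2 (n s) : ℕ) := by
          push_cast [k, pow_succ]; ring
      _ ≤ n s := by exact_mod_cast Nat.pow_log_le_self 2 (by omega)
  set G := specNorm (cornerMatrix a (c * 2 ^ k s) (2 ^ k s))
  calc specNorm (cornerMatrix a (m s) (n s)) / n s ≤ G / n s := by
        gcongr
        exact specNorm_cornerMatrix_le a (hms.trans (Nat.mul_le_mul_left c hn_lt.le)) hn_lt.le
    _ ≤ G / (2 ^ k s / 2) := div_le_div_of_nonneg_left (norm_nonneg _) (by positivity) hpow_le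
    _ = 2 * (G / 2 ^ k s) := by ring

theorem eventually_le_mul_of_tendsto_div {α : Type*} {l : Filter α} {m n : α → ℕ} {ρ : ℝ}
    (hn : ∀ᶠ s in l, 0 < n s) (h : Tendsto (fun s => (m s : ℝ) / n s) l (nhds ρ)) :
    ∀ᶠ s in l, m s ≤ (⌈ρ⌉₊ + 1) * n s := by
  have hρ : ρ < ((⌈ρ⌉₊ + 1 : ℕ) : ℝ) := by push_cast; linarith [Nat.le_ceil ρ]
  filter_upwards [hn, h.eventually (gt_mem_nhds hρ)] with s hns hs
  rw [div_lt_iff₀ (by exact_mod_cast hns)] at hs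
  exact_mod_cast hs.le

theorem tendsto_inv_sqrt_mul_mul_of_tendsto_div {α : Type*} {l : Filter α} {x y f : α → ℝ} {ρ : ℝ}
    (hρ : 0 < ρ) (hy : ∀ᶠ s in l, 0 < y s) (hxy : Tendsto (fun s => x s / y s) l (nhds ρ))
    (hf : Tendsto (fun s => f s / y s) l (nhds 0)) :
    Tendsto (fun s => (√(x s * y s))⁻¹ * f s) l (nhds 0) := by
  have hlim : Tendsto (fun s => (√(x s / y s))⁻¹ * (f s / y s)) l (nhds ((√ρ)⁻¹ * 0)) :=
    (hxy.sqrt.inv₀ (Real.sqrt_ne_zero'.2 hρ)).mul hf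
  rw [mul_zero] at hlim
  refine hlim.congr' ?_
  filter_upwards [hy] with s hys
  have hsplit : √(x s * y s) = √(x s / y s) * y s := by
    rw [← Real.sqrt_sq hys.le, ← Real.sqrt_mul' _ (sq_nonneg _), Real.sqrt_sq hys.le]
    congr 1
    field_simp
  rw [hsplit, mul_inv, div_eq_mul_inv]
  ring

theorem matrix_concentration_rank_one_general {Ω : Type*} [MeasurableSpace Ω]
    (P : Measure Ω) [IsProbabilityMeasure P]
    (X : ℕ × ℕ → Ω → ℝ) (hmeas : ∀ p, Measurable (X p))
    (hindep : iIndepFun X P)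
    (hident : ∀ p, IdentDistrib (X p) (X (0, 0)) P P)
    (t : ℝ) (hmean : ∫ ω, X (0, 0) ω ∂P = t)
    (hmom4 : Integrable (fun ω => (X (0, 0) ω) ^ 4) P)
    (m n : ℕ → ℕ) (hn : Tendsto n atTop atTop)
    (ρ : ℝ) (hρ : 0 < ρ)
    (hratio : Tendsto (fun s => (m s : ℝ) / (n s : ℝ)) atTop (nhds ρ)) :
    ∀ᵐ ω ∂P, Tendsto (fun s => specNorm
        ((Real.sqrt ((m s : ℝ) * (n s : ℝ)))⁻¹ •
          (Matrix.of (fun (i : Fin (m s)) (j : Fin (n s)) => X ((i : ℕ), (j : ℕ)) ω)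
            - t • Matrix.of (fun _ _ => (1:ℝ)))))
      atTop (nhds 0) := by
  set Y : ℕ × ℕ → Ω → ℝ := fun p ω => X p ω - t
  have hpow4 : Measurable fun x : ℝ => x ^ 4 := by fun_prop
  have hYident (p : ℕ × ℕ) : IdentDistrib (Y p) (Y (0, 0)) P P :=
    (hident p).comp (measurable_sub_const t)
  have hY4 (p : ℕ × ℕ) : Integrable (fun ω => Y p ω ^ 4) P :=
    ((hYident p).comp hpow4).integrable_iff.2 (hmom4.sub_pow_four (hmeas _).aestronglyMeasurable t)
  have hX (p : ℕ × ℕ) : Integrable (X p) P :=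
    (hident p).integrable_iff.2 (hmom4.of_pow_four (hmeas _).aestronglyMeasurable)
  have hcenter (p : ℕ × ℕ) : ∫ ω, Y p ω ∂P = 0 := by
    rw [integral_sub (hX p) (integrable_const t), (hident p).integral_eq, hmean, integral_const,
      probReal_univ, one_smul, sub_self]
  have hn_pos : ∀ᶠ s in atTop, 0 < n s := hn.eventually_gt_atTop 0
  filter_upwards [ae_tendsto_specNorm_cornerMatrix_dyadic
    (hindep.comp (fun _ x => x - t) fun _ => measurable_sub_const t)
    (fun p => (hmeas p).sub_const t) hcenter hY4 (fun p => ((hYident p).comp hpow4).integral_eq.le)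
    (⌈ρ⌉₊ + 1)] with ω hω
  have hmatrix (s : ℕ) :
      Matrix.of (fun (i : Fin (m s)) (j : Fin (n s)) => X ((i : ℕ), (j : ℕ)) ω)
        - t • Matrix.of (fun _ _ => (1:ℝ)) = cornerMatrix (fun i j => Y (i, j) ω) (m s) (n s) := by
    ext i j
    simp [cornerMatrix, Y]
  simp only [hmatrix, specNorm_smul, abs_of_nonneg (inv_nonneg.2 (Real.sqrt_nonneg _))]
  exact tendsto_inv_sqrt_mul_mul_of_tendsto_div hρ (hn_pos.mono fun s hs => by exact_mod_cast hs) hratio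
    (tendsto_specNorm_cornerMatrix_div _ _ hω hn (eventually_le_mul_of_tendsto_div hn_pos hratio))

/-- for an array of i.i.d. nonnegative random variables with
mean `t` and bounded fourth moment, the scaled matrices `M/√(mn)` converge
almost surely in spectral norm to the rank-one mean matrix
`t 1_m 1_nᵀ/√(mn)` as `m, n → ∞` with `m/n → ρ > 0`. -/
theorem matrix_concentration_rank_one {Ω : Type*} [MeasurableSpace Ω]
    (P : Measure Ω) [IsProbabilityMeasure P]
    (X : ℕ × ℕ → Ω → ℝ) (hmeas : ∀ p, Measurable (X p))
    (hindep : iIndepFun X P)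
    (hident : ∀ p, IdentDistrib (X p) (X (0, 0)) P P)
    (t : ℝ) (hmean : ∫ ω, X (0, 0) ω ∂P = t)
    (hnonneg : ∀ p ω, 0 ≤ X p ω)
    (hmom4 : Integrable (fun ω => (X (0, 0) ω) ^ 4) P)
    (m n : ℕ → ℕ) (hm : Tendsto m atTop atTop) (hn : Tendsto n atTop atTop)
    (ρ : ℝ) (hρ : 0 < ρ)
    (hratio : Tendsto (fun s => (m s : ℝ) / (n s : ℝ)) atTop (nhds ρ)) :
    ∀ᵐ ω ∂P, Tendsto (fun s => specNorm
        ((Real.sqrt ((m s : ℝ) * (n s : ℝ)))⁻¹ •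
          (Matrix.of (fun (i : Fin (m s)) (j : Fin (n s)) => X ((i : ℕ), (j : ℕ)) ω)
            - t • Matrix.of (fun _ _ => (1:ℝ)))))
      atTop (nhds 0) :=
  matrix_concentration_rank_one_general P X hmeas hindep hident t hmean hmom4 m n hn ρ hρ hratio
end
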